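/- arXiv:2210.08637 — 2 statements merged into one kernel-verified Lean document; each statement's English description precedes it below -/
import Mathlib

section
/- (Weak Mukai Lemma.) Let T be a non-rational triangulated category of finite type over k with Serre functor, equipped with a stability condition σ with gldim(σ) < 2. Let A → E → B be an exact triangle in T satisfying φ_σ⁻(A) > φ_σ⁺(B). Then dim Hom(A,A[1]) + dim Hom(B,B[1]) ≤ dim Hom(E,E[1]). -/
open CategoryTheory Limits Pretriangulated

noncomputable section

universe v u v₂ u₂ v₃ u₃

section Defs

variable (k : Type) [Field k]
variable (C : Type u) [Category.{v} C] [Preadditive C] [Linear k C]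
  [HasZeroObject C] [HasShift C ℤ] [∀ n : ℤ, (shiftFunctor C n).Additive]
  [Pretriangulated C]

/-- The triangulated category `C` is of finite type over `k`: all graded Hom spaces are
finite dimensional, and only finitely many are nonzero. -/
def FiniteTypeCat : Prop :=
  ∀ X Y : C, (∀ i : ℤ, FiniteDimensional k (X ⟶ Y⟦i⟧)) ∧
    (Function.support fun i : ℤ => Module.finrank k (X ⟶ Y⟦i⟧)).Finite

/-- The Euler pairing `χ(X,Y) = ∑ᵢ (−1)ⁱ dim Hom(X, Y[i])`. -/
def eulerChi (X Y : C) : ℤ :=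
  ∑ᶠ i : ℤ, (((-1 : ℤˣ) ^ i : ℤˣ) : ℤ) * (Module.finrank k (X ⟶ Y⟦i⟧) : ℤ)

/-- Two objects are numerically equivalent when they have the same class in the numerical
Grothendieck group `K_num = K₀ / ker χ`. -/
def numEquiv (X Y : C) : Prop :=
  ∀ G : C, eulerChi k C G X = eulerChi k C G Y ∧ eulerChi k C X G = eulerChi k C Y G

/-- An exceptional object: `Hom(X,X) = k` and `Hom(X,X[i]) = 0` for `i ≠ 0`. -/
def IsExceptional (X : C) : Prop :=
  Module.finrank k (X ⟶ X) = 1 ∧ ∀ i : ℤ, i ≠ 0 → Module.finrank k (X ⟶ X⟦i⟧) = 0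

/-- `C` is non-rational if it contains no exceptional objects. -/
def NonRational : Prop := ∀ X : C, ¬ IsExceptional k C X

/-- The minimal value of `dim Hom(X, X[1])` over nonzero objects `X` of `C`. -/
def minExt1 : ℕ :=
  sInf {d : ℕ | ∃ X : C, ¬ IsZero X ∧ Module.finrank k (X ⟶ X⟦(1 : ℤ)⟧) = d}

/-- A Bridgeland stability condition on the triangulated category `C`, recorded via its
slicing `P`, central charge `Z`, phase functions, and Harder–Narasimhan filtrations. -/
structure StabilityCondition where
  /-- the semistable objects of phase `φ` -/
  P : ℝ → Set C
  /-- the central charge -/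
  Z : C → ℂ
  zero_mem : ∀ (φ : ℝ) (X : C), IsZero X → X ∈ P φ
  shift_mem : ∀ (φ : ℝ) (X : C), X ∈ P φ → X⟦(1 : ℤ)⟧ ∈ P (φ + 1)
  hom_zero : ∀ (φ₁ φ₂ : ℝ) (X Y : C), X ∈ P φ₁ → Y ∈ P φ₂ → φ₂ < φ₁ → ∀ f : X ⟶ Y, f = 0
  Z_additive : ∀ T ∈ distTriang C, Z T.obj₂ = Z T.obj₁ + Z T.obj₃
  Z_pos : ∀ (φ : ℝ) (X : C), X ∈ P φ → ¬ IsZero X →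
    ∃ m : ℝ, 0 < m ∧ Z X = (m : ℂ) * Complex.exp ((Real.pi * φ : ℝ) * Complex.I)
  /-- the phase of a (nonzero, semistable) object -/
  phase : C → ℝ
  phase_eq : ∀ (φ : ℝ) (X : C), X ∈ P φ → ¬ IsZero X → phase X = φ
  /-- the largest Harder–Narasimhan phase `φ⁺` -/
  phiP : C → ℝ
  /-- the smallest Harder–Narasimhan phase `φ⁻` -/
  phiM : C → ℝ
  phiM_le_phiP : ∀ X : C, phiM X ≤ phiP X
  phi_eq : ∀ (φ : ℝ) (X : C), X ∈ P φ → ¬ IsZero X → phiP X = φ ∧ phiM X = φ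
  HN : ∀ X : C, ∃ (n : ℕ) (A : Fin (n + 1) → C) (φs : Fin n → ℝ),
    StrictAnti φs ∧ IsZero (A 0) ∧ Nonempty (A (Fin.last n) ≅ X) ∧
    (∀ i : Fin n, phiM X ≤ φs i ∧ φs i ≤ phiP X) ∧
    ∀ i : Fin n, ∃ (F : C) (_ : F ∈ P (φs i)) (f : A i.castSucc ⟶ A i.succ)
      (g : A i.succ ⟶ F) (h : F ⟶ (A i.castSucc)⟦(1 : ℤ)⟧),
        Triangle.mk f g h ∈ distTriang C

variable {C}

/-- An object is `σ`-semistable if it is nonzero and lies in `P(φ)` for some phase `φ`. -/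
def IsSemistable (σ : StabilityCondition C) (X : C) : Prop :=
  ¬ IsZero X ∧ ∃ φ : ℝ, X ∈ σ.P φ

/-- An object is `σ`-stable of phase `φ` if it is a nonzero simple object of the
quasi-abelian category `P(φ)`. -/
def IsStableOfPhase (σ : StabilityCondition C) (φ : ℝ) (X : C) : Prop :=
  ¬ IsZero X ∧ X ∈ σ.P φ ∧
    ∀ (Y Q : C) (f : Y ⟶ X) (g : X ⟶ Q) (h : Q ⟶ Y⟦(1 : ℤ)⟧),
      Y ∈ σ.P φ → Q ∈ σ.P φ → Triangle.mk f g h ∈ (distTriang C) → (IsZero Y ∨ IsZero Q)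

/-- An object is `σ`-stable if it is `σ`-stable of some phase. -/
def IsStable (σ : StabilityCondition C) (X : C) : Prop :=
  ∃ φ : ℝ, IsStableOfPhase σ φ X

/-- The global dimension
`gldim σ = sup {φ₂ − φ₁ | Hom(E₁,E₂) ≠ 0, Eᵢ ∈ P(φᵢ)} ∈ [0,∞]` (as an extended real). -/
def gldim (σ : StabilityCondition C) : EReal :=
  sSup {d : EReal | ∃ (φ₁ φ₂ : ℝ) (X Y : C), X ∈ σ.P φ₁ ∧ Y ∈ σ.P φ₂ ∧
    (∃ f : X ⟶ Y, f ≠ 0) ∧ d = ((φ₂ - φ₁ : ℝ) : EReal)}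

/-- A stability condition is numerical when its central charge factors through the
numerical Grothendieck group. -/
def IsNumerical (σ : StabilityCondition C) : Prop :=
  ∀ X Y : C, numEquiv k C X Y → σ.Z X = σ.Z Y

/-- The image of the central charge `Im(Z) ⊆ ℂ` is discrete. -/
def HasDiscreteImage (σ : StabilityCondition C) : Prop :=
  ∀ X : C, ∃ ε : ℝ, 0 < ε ∧ ∀ Y : C, ‖σ.Z Y - σ.Z X‖ < ε → σ.Z Y = σ.Z X

/-- The extension-closed subcategory `P(I)` generated by semistable objects with
phases in the interval `I`. -/
def PIn (σ : StabilityCondition C) (I : Set ℝ) : Set C :=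
  {X | ∃ (n : ℕ) (A : Fin (n + 1) → C), IsZero (A 0) ∧ Nonempty (A (Fin.last n) ≅ X) ∧
    ∀ i : Fin n, ∃ (φ : ℝ) (F : C), φ ∈ I ∧ F ∈ σ.P φ ∧
      ∃ (f : A i.castSucc ⟶ A i.succ) (g : A i.succ ⟶ F) (h : F ⟶ (A i.castSucc)⟦(1 : ℤ)⟧),
        Triangle.mk f g h ∈ distTriang C}

/-- A Jordan–Hölder filtration of `X` in phase `φ` with stable factors `F i`. -/
def IsJHFiltration (σ : StabilityCondition C) (φ : ℝ) (X : C) {n : ℕ} (F : Fin n → C) : Prop :=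
  ∃ A : Fin (n + 1) → C, IsZero (A 0) ∧ Nonempty (A (Fin.last n) ≅ X) ∧
    ∀ i : Fin n, IsStableOfPhase σ φ (F i) ∧
      ∃ (f : A i.castSucc ⟶ A i.succ) (g : A i.succ ⟶ F i) (h : F i ⟶ (A i.castSucc)⟦(1 : ℤ)⟧),
        Triangle.mk f g h ∈ distTriang C

variable (C)

/-- A Serre functor on `C`: an autoequivalence `S` together with Serre duality
`Hom(X,Y) ≃ Hom(Y, S X)^∨`. -/
structure SerreFunctor where
  /-- the underlying autoequivalence -/
  S : C ≌ C
  duality : ∀ X Y : C, (X ⟶ Y) ≃ₗ[k] Module.Dual k (Y ⟶ S.functor.obj X)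

/-- An object `F` is `1`-spherical: `S F ≅ F[1]` and `Hom(F,F[i])` is `k` for `i = 0, 1`,
and vanishes otherwise. -/
def IsOneSpherical (Ser : SerreFunctor k C) (F : C) : Prop :=
  Nonempty (Ser.S.functor.obj F ≅ F⟦(1 : ℤ)⟧) ∧
  Module.finrank k (F ⟶ F) = 1 ∧ Module.finrank k (F ⟶ F⟦(1 : ℤ)⟧) = 1 ∧
  ∀ i : ℤ, i ≠ 0 → i ≠ 1 → Module.finrank k (F ⟶ F⟦i⟧) = 0

/-- `G` is a classical generator: the only subcategory of `C` containing `G` and closed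
under isomorphisms, shifts, cones and direct summands is `C` itself. -/
def IsClassicalGenerator (G : C) : Prop :=
  ∀ S : Set C, G ∈ S →
    (∀ X Y : C, X ∈ S → Nonempty (X ≅ Y) → Y ∈ S) →
    (∀ (n : ℤ) (X : C), X ∈ S → X⟦n⟧ ∈ S) →
    (∀ T ∈ distTriang C, T.obj₁ ∈ S → T.obj₂ ∈ S → T.obj₃ ∈ S) →
    (∀ X Y : C, Y ∈ S → (∃ (r : X ⟶ Y) (s : Y ⟶ X), r ≫ s = 𝟙 X) → X ∈ S) →
    ∀ X : C, X ∈ S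

variable {C}

/-- The upper Serre dimension `limsup (1/n) φ⁺(Sⁿ G)`. -/
def upperSerreDim (σ : StabilityCondition C) (Ser : SerreFunctor k C) (G : C) : ℝ :=
  Filter.limsup (fun n : ℕ => σ.phiP ((Ser.S.functor.obj)^[n] G) / (n : ℝ)) Filter.atTop

/-- The lower Serre dimension `limsup (1/n) φ⁻(Sⁿ G)`. -/
def lowerSerreDim (σ : StabilityCondition C) (Ser : SerreFunctor k C) (G : C) : ℝ :=
  Filter.limsup (fun n : ℕ => σ.phiM ((Ser.S.functor.obj)^[n] G) / (n : ℝ)) Filter.atTop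

/-- The datum of an element `g = (T, f)` of `G̃L⁺₂(ℝ)` such that `S · σ = σ · g`,
witnessing Serre invariance of `σ`. -/
structure SerreAction (Ser : SerreFunctor k C) (σ : StabilityCondition C) where
  /-- the increasing function on phases -/
  f : ℝ → ℝ
  /-- the linear part acting on the central charge -/
  T : ℂ →ₗ[ℝ] ℂ
  f_mono : StrictMono f
  f_per : ∀ φ : ℝ, f (φ + 1) = f φ + 1
  compat : ∀ (φ m : ℝ), 0 < m → ∃ m' : ℝ, 0 < m' ∧
    T ((m : ℂ) * Complex.exp ((Real.pi * φ : ℝ) * Complex.I))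
      = (m' : ℂ) * Complex.exp ((Real.pi * f φ : ℝ) * Complex.I)
  mem_iff : ∀ (φ : ℝ) (X : C), X ∈ σ.P φ ↔ Ser.S.functor.obj X ∈ σ.P (f φ)
  Z_compat : ∀ X : C, σ.Z (Ser.S.functor.obj X) = T (σ.Z X)

/-- `σ` is Serre-invariant: `S · σ = σ · g` for some `g ∈ G̃L⁺₂(ℝ)`. -/
def SerreInvariant (Ser : SerreFunctor k C) (σ : StabilityCondition C) : Prop :=
  Nonempty (SerreAction k Ser σ)

variable (C)

/-- A completely orthogonal decomposition of `C` into `A` and `B`. -/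
def CompletelyOrthogonalDecomp (A B : Set C) : Prop :=
  (∃ a ∈ A, ¬ IsZero a) ∧ (∃ b ∈ B, ¬ IsZero b) ∧
  (∀ a ∈ A, ∀ b ∈ B, ∀ i : ℤ, (∀ f : a ⟶ b⟦i⟧, f = 0) ∧ (∀ g : b ⟶ a⟦i⟧, g = 0)) ∧
  (∀ X : C, ∃ a ∈ A, ∃ b ∈ B, ∃ (ia : a ⟶ X) (pa : X ⟶ a) (ib : b ⟶ X) (pb : X ⟶ b),
    ia ≫ pa = 𝟙 a ∧ ib ≫ pb = 𝟙 b ∧ pa ≫ ia + pb ≫ ib = 𝟙 X)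

/-- `C` is connected: it admits no nontrivial completely orthogonal decomposition. -/
def IsConnectedCat : Prop := ¬ ∃ A B : Set C, CompletelyOrthogonalDecomp C A B

/-- The objects which are finite direct sums of shifts of `E`. -/
def sumOfShifts (E : C) : Set C :=
  {X | ∃ (m : ℕ) (s : Fin m → ℤ) (ι : ∀ j : Fin m, (E⟦s j⟧) ⟶ X)
      (π : ∀ j : Fin m, X ⟶ (E⟦s j⟧)),
    (∀ j, ι j ≫ π j = 𝟙 (E⟦s j⟧)) ∧ (∀ j j', j ≠ j' → ι j ≫ π j' = 0) ∧
    (∑ j : Fin m, π j ≫ ι j) = 𝟙 X}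

/-- A semiorthogonal decomposition of `C` with components `Ds 0, …, Ds (m-1)`
(in the usual left-to-right order). -/
def IsSOD {m : ℕ} (Ds : Fin m → Set C) : Prop :=
  (∀ i j : Fin m, j < i → ∀ X ∈ Ds i, ∀ Y ∈ Ds j, ∀ f : X ⟶ Y, f = 0) ∧
  (∀ X : C, ∃ A : Fin (m + 1) → C,
    IsZero (A 0) ∧ Nonempty (A (Fin.last m) ≅ X) ∧
    ∀ i : Fin m, ∃ (F : C) (_ : F ∈ Ds i.rev) (f : A i.castSucc ⟶ A i.succ)
      (g : A i.succ ⟶ F) (h : F ⟶ (A i.castSucc)⟦(1 : ℤ)⟧),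
        Triangle.mk f g h ∈ distTriang C)

/-- A noncommutative curve in the sense of Definition 3.2: a stability condition with
heart `P(φ₀, φ₀+1]` and an object `E` realizing the minimal `hom¹`, with `E` and `SE[-1]`
in the heart and the two global dimension inequalities. -/
structure NoncommutativeCurve (Ser : SerreFunctor k C) where
  /-- the stability condition -/
  σ : StabilityCondition C
  /-- the endpoint of the heart `P(φ₀, φ₀+1]` -/
  φ₀ : ℝ
  /-- the distinguished object with minimal `hom¹(E,E)` -/
  E : C
  hE_min : Module.finrank k (E ⟶ E⟦(1 : ℤ)⟧) = minExt1 k C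
  memE : E ∈ PIn σ (Set.Ioc φ₀ (φ₀ + 1))
  memSE : (Ser.S.functor.obj E)⟦(-1 : ℤ)⟧ ∈ PIn σ (Set.Ioc φ₀ (φ₀ + 1))
  ineq₁ : gldim σ < ((φ₀ + 2 - σ.phase ((Ser.S.functor.obj E)⟦(-1 : ℤ)⟧) : ℝ) : EReal)
  ineq₂ : gldim σ < ((σ.phase E + 2 - (φ₀ + 1) : ℝ) : EReal)

end Defs

section TwoCat

variable (D : Type u) [Category.{v} D] [Preadditive D]
  [HasZeroObject D] [HasShift D ℤ] [∀ n : ℤ, (shiftFunctor D n).Additive]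
  [Pretriangulated D]
variable (T : Type u₂) [Category.{v₂} T] [Preadditive T]
  [HasZeroObject T] [HasShift T ℤ] [∀ n : ℤ, (shiftFunctor T n).Additive]
  [Pretriangulated T]

/-- `F` is a triangulated functor with respect to the given shift-commutation data. -/
def IsTriangulatedWith (F : D ⥤ T) (cs : F.CommShift ℤ) : Prop :=
  letI := cs; F.IsTriangulated

/-- An admissible embedding: a fully faithful triangulated functor admitting both
a left and a right adjoint. -/
structure AdmissibleEmbedding where
  /-- the underlying functor -/
  F : D ⥤ T
  full : F.Full
  faithful : F.Faithful
  commShift : F.CommShift ℤ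
  triangulated : IsTriangulatedWith D T F commShift
  hasRightAdjoint : F.IsLeftAdjoint
  hasLeftAdjoint : F.IsRightAdjoint

/-- An equivalence of triangulated categories. -/
structure TriangEquiv where
  /-- the underlying equivalence of categories -/
  e : D ≌ T
  commShift : e.functor.CommShift ℤ
  triangulated : IsTriangulatedWith D T e.functor commShift

end TwoCat

/-- A bundled triangulated category, linear over `k`. -/
structure TriCat (k : Type) [Field k] where
  /-- the underlying type of objects -/
  Obj : Type u
  [instCat : Category.{v} Obj]
  [instPre : Preadditive Obj]
  [instLin : Linear k Obj]
  [instZero : HasZeroObject Obj]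
  [instShift : HasShift Obj ℤ]
  [instAdd : ∀ n : ℤ, (shiftFunctor Obj n).Additive]
  [instTri : Pretriangulated Obj]

attribute [instance] TriCat.instCat TriCat.instPre TriCat.instLin TriCat.instZero
  TriCat.instShift TriCat.instAdd TriCat.instTri

/-- An interface for the algebro-geometric input of the paper: smooth projective
varieties and curves over `k` with their bounded derived categories of coherent sheaves,
the genus of a curve, and proper algebraic spaces over `k`. -/
structure AlgGeom (k : Type) [Field k] where
  /-- smooth projective varieties over `k` -/
  Variety : Type
  /-- the bounded derived category `D^b(X)` of coherent sheaves -/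
  Db : Variety → TriCat.{u, v} k
  /-- smooth projective curves over `k` -/
  Curve : Type
  /-- a smooth projective curve is a smooth projective variety -/
  toVariety : Curve → Variety
  /-- the genus of a smooth projective curve -/
  genus : Curve → ℕ
  /-- proper algebraic spaces over `k` -/
  Space : Type
  /-- properness for algebraic spaces over `k` -/
  IsProperSpace : Space → Prop
  /-- the property of being a smooth projective curve over `k` -/
  IsSmoothProjectiveCurveSpace : Space → Prop
  /-- the `k`-points of an algebraic space -/
  points : Space → Type

section Moduli

variable {D : Type u} [Category.{v} D]

/-- Isomorphism classes of objects in a class `S` of objects. -/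
def isoSetoid (S : Set D) : Setoid {X : D // X ∈ S} where
  r a b := Nonempty (a.1 ≅ b.1)
  iseqv := ⟨fun _ => ⟨Iso.refl _⟩, fun ⟨e⟩ => ⟨e.symm⟩, fun ⟨e⟩ ⟨f⟩ => ⟨e.trans f⟩⟩

end Moduli

section Moduli2

variable (k : Type) [Field k]
variable (D : Type u) [Category.{v} D] [Preadditive D] [Linear k D]
  [HasZeroObject D] [HasShift D ℤ] [∀ n : ℤ, (shiftFunctor D n).Additive]
  [Pretriangulated D]

/-- The `σ`-semistable objects numerically equivalent to `E₀` (i.e. of class `v = v(E₀)`). -/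
def semistableOfClass (σ : StabilityCondition D) (E₀ : D) : Set D :=
  {F | IsSemistable σ F ∧ numEquiv k D F E₀}

/-- A coarse moduli space for the `σ`-semistable objects of class `v(E₀)`: a proper
algebraic space over `k` whose points are the isomorphism classes of such objects. -/
structure CoarseModuli (G : AlgGeom.{u₂, v₂} k) (σ : StabilityCondition D) (E₀ : D) where
  /-- the underlying algebraic space -/
  M : G.Space
  proper : G.IsProperSpace M
  /-- points of `M` are isomorphism classes of semistable objects of class `v(E₀)` -/
  pts : G.points M ≃ Quotient (isoSetoid (semistableOfClass k D σ E₀))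

end Moduli2

section WMLAux

variable {D : Type u} [Category.{v} D] [Preadditive D] [HasZeroObject D]
  [HasShift D ℤ] [∀ n : ℤ, (shiftFunctor D n).Additive] [Pretriangulated D]

/-- Auxiliary: `X` admits a finite filtration with factors in `S`. -/
def FiltBy (S : Set D) (X : D) : Prop :=
  ∃ (n : ℕ) (A : Fin (n + 1) → D), IsZero (A 0) ∧ Nonempty (A (Fin.last n) ≅ X) ∧
    ∀ i : Fin n, ∃ F ∈ S, ∃ (u : A i.castSucc ⟶ A i.succ) (v : A i.succ ⟶ F)
      (w : F ⟶ (A i.castSucc)⟦(1 : ℤ)⟧), Triangle.mk u v w ∈ distTriang D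

lemma filtBy_iso {S : Set D} {X X' : D} (e : X ≅ X') (hX : FiltBy S X) : FiltBy S X' := by
  obtain ⟨n, A, h0, ⟨e'⟩, hfac⟩ := hX
  exact ⟨n, A, h0, ⟨e'.trans e⟩, hfac⟩

lemma filtBy_hom_zero_right {T : Set D} {U Y : D}
    (hU : ∀ V ∈ T, ∀ u : U ⟶ V, u = 0) (hY : FiltBy T Y) : ∀ u : U ⟶ Y, u = 0 := by
  obtain ⟨n, A, h0, ⟨e⟩, hfac⟩ := hY
  suffices hall : ∀ j : Fin (n + 1), ∀ u : U ⟶ A j, u = 0 by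
    intro u
    have h1 := hall (Fin.last n) (u ≫ e.inv)
    calc u = (u ≫ e.inv) ≫ e.hom := by simp
    _ = 0 := by rw [h1, zero_comp]
  intro j
  induction j using Fin.induction with
  | zero => intro u; exact h0.eq_zero_of_tgt u
  | succ i ih =>
    intro u
    obtain ⟨F, hF, uu, vv, ww, hTri⟩ := hfac i
    obtain ⟨w', hw'⟩ := Pretriangulated.Triangle.coyoneda_exact₂ _ hTri u (hU F hF _)
    rw [hw', ih w']; exact zero_comp

lemma filtBy_hom_zero {S T : Set D} {X Y : D}
    (hST : ∀ U ∈ S, ∀ V ∈ T, ∀ u : U ⟶ V, u = 0)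
    (hX : FiltBy S X) (hY : FiltBy T Y) : ∀ u : X ⟶ Y, u = 0 := by
  obtain ⟨n, A, h0, ⟨e⟩, hfac⟩ := hX
  suffices hall : ∀ j : Fin (n + 1), ∀ u : A j ⟶ Y, u = 0 by
    intro u
    have h1 := hall (Fin.last n) (e.hom ≫ u)
    calc u = e.inv ≫ e.hom ≫ u := by simp
    _ = 0 := by rw [h1, comp_zero]
  intro j
  induction j using Fin.induction with
  | zero => intro u; exact h0.eq_zero_of_src u
  | succ i ih =>
    intro u
    obtain ⟨F, hF, uu, vv, ww, hTri⟩ := hfac i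
    obtain ⟨w', hw'⟩ := Pretriangulated.Triangle.yoneda_exact₂ _ hTri u (ih (uu ≫ u))
    rw [hw', filtBy_hom_zero_right (fun V hV => hST F hF V hV) hY w']; exact comp_zero

lemma filtBy_shift {S S' : Set D} (hS : ∀ F ∈ S, F⟦(1 : ℤ)⟧ ∈ S') {X : D}
    (hX : FiltBy S X) : FiltBy S' (X⟦(1 : ℤ)⟧) := by
  obtain ⟨n, A, h0, ⟨e⟩, hfac⟩ := hX
  refine ⟨n, fun i => (A i)⟦(1 : ℤ)⟧, (shiftFunctor D (1 : ℤ)).map_isZero h0,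
    ⟨(shiftFunctor D (1 : ℤ)).mapIso e⟩, fun i => ?_⟩
  obtain ⟨F, hF, uu, vv, ww, hTri⟩ := hfac i
  exact ⟨F⟦(1 : ℤ)⟧, hS F hF, -(shiftFunctor D (1 : ℤ)).map uu,
    -(shiftFunctor D (1 : ℤ)).map vv, -(shiftFunctor D (1 : ℤ)).map ww,
    rot_of_distTriang _ (rot_of_distTriang _ (rot_of_distTriang _ hTri))⟩

lemma filtBy_HN_ge (σ : StabilityCondition D) (X : D) :
    FiltBy {F : D | ∃ φ : ℝ, σ.phiM X ≤ φ ∧ F ∈ σ.P φ} X := by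
  obtain ⟨n, A, φs, -, h0, hiso, hrange, hfac⟩ := σ.HN X
  refine ⟨n, A, h0, hiso, fun i => ?_⟩
  obtain ⟨F, hF, u, v, w, hTri⟩ := hfac i
  exact ⟨F, ⟨φs i, (hrange i).1, hF⟩, u, v, w, hTri⟩

lemma filtBy_HN_le (σ : StabilityCondition D) (X : D) :
    FiltBy {F : D | ∃ φ : ℝ, φ ≤ σ.phiP X ∧ F ∈ σ.P φ} X := by
  obtain ⟨n, A, φs, -, h0, hiso, hrange, hfac⟩ := σ.HN X
  refine ⟨n, A, h0, hiso, fun i => ?_⟩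
  obtain ⟨F, hF, u, v, w, hTri⟩ := hfac i
  exact ⟨F, ⟨φs i, (hrange i).2, hF⟩, u, v, w, hTri⟩

lemma hom_zero_of_gap (σ : StabilityCondition D) (hgl : gldim σ < (2 : EReal))
    {φ ψ : ℝ} (hgap : ψ + 2 ≤ φ) {U V : D} (hU : U ∈ σ.P ψ) (hV : V ∈ σ.P φ) :
    ∀ u : U ⟶ V, u = 0 := by
  intro u
  by_contra hu
  have h1 : ((φ - ψ : ℝ) : EReal) ≤ gldim σ :=
    le_sSup ⟨ψ, φ, U, V, hU, hV, ⟨u, hu⟩, rfl⟩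
  have h2 : (2 : EReal) ≤ ((φ - ψ : ℝ) : EReal) := by
    rw [show (2 : EReal) = ((2 : ℝ) : EReal) by norm_cast]
    exact_mod_cast (by linarith : (2 : ℝ) ≤ φ - ψ)
  exact absurd ((h2.trans h1).trans_lt hgl) (lt_irrefl _)

end WMLAux

/-- Lemma `lem:wml`, Weak Mukai Lemma. For an exact triangle
`A → E → B` with `φ⁻(A) > φ⁺(B)` in a non-rational finite type category with Serre
functor and `gldim σ < 2`, one has `hom¹(A,A) + hom¹(B,B) ≤ hom¹(E,E)`. -/
theorem statement5 (k : Type) [Field k]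
    (D : Type u) [Category.{v} D] [Preadditive D] [Linear k D] [HasZeroObject D]
    [HasShift D ℤ] [∀ n : ℤ, (shiftFunctor D n).Additive] [Pretriangulated D]
    (hft : FiniteTypeCat k D) (hnr : NonRational k D)
    (Ser : SerreFunctor k D)
    (σ : StabilityCondition D) (hgl : gldim σ < (2 : EReal))
    (A E B : D) (f : A ⟶ E) (g : E ⟶ B) (h : B ⟶ A⟦(1 : ℤ)⟧)
    (hT : Triangle.mk f g h ∈ distTriang D)
    (hφ : σ.phiP B < σ.phiM A) :
    Module.finrank k (A ⟶ A⟦(1 : ℤ)⟧) + Module.finrank k (B ⟶ B⟦(1 : ℤ)⟧)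
      ≤ Module.finrank k (E ⟶ E⟦(1 : ℤ)⟧) := by
  classical
  haveI hfdE : FiniteDimensional k (E ⟶ E⟦(1 : ℤ)⟧) := (hft E E).1 1
  haveI hfdA : FiniteDimensional k (A ⟶ A⟦(1 : ℤ)⟧) := (hft A A).1 1
  haveI hfdB : FiniteDimensional k (B ⟶ B⟦(1 : ℤ)⟧) := (hft B B).1 1
  -- filtrations with controlled phases
  have hFA : FiltBy {F : D | ∃ φ : ℝ, σ.phiM A ≤ φ ∧ F ∈ σ.P φ} A := filtBy_HN_ge σ A
  have hFB : FiltBy {F : D | ∃ φ : ℝ, φ ≤ σ.phiP B ∧ F ∈ σ.P φ} B := filtBy_HN_le σ B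
  have hFA1 : FiltBy {F : D | ∃ φ : ℝ, σ.phiM A + 1 ≤ φ ∧ F ∈ σ.P φ} (A⟦(1 : ℤ)⟧) :=
    filtBy_shift (fun F hF => by
      obtain ⟨φ, hφ1, hφ2⟩ := hF
      exact ⟨φ + 1, by linarith, σ.shift_mem φ F hφ2⟩) hFA
  have hFA2 : FiltBy {F : D | ∃ φ : ℝ, σ.phiM A + 2 ≤ φ ∧ F ∈ σ.P φ}
      ((A⟦(1 : ℤ)⟧)⟦(1 : ℤ)⟧) :=
    filtBy_shift (fun F hF => by
      obtain ⟨φ, hφ1, hφ2⟩ := hF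
      exact ⟨φ + 1, by linarith, σ.shift_mem φ F hφ2⟩) hFA1
  have hFB1 : FiltBy {F : D | ∃ φ : ℝ, φ ≤ σ.phiP B + 1 ∧ F ∈ σ.P φ} (B⟦(1 : ℤ)⟧) :=
    filtBy_shift (fun F hF => by
      obtain ⟨φ, hφ1, hφ2⟩ := hF
      exact ⟨φ + 1, by linarith, σ.shift_mem φ F hφ2⟩) hFB
  have hFBm : FiltBy {F : D | ∃ φ : ℝ, φ ≤ σ.phiP B ∧ F ∈ σ.P φ}
      ((B⟦(-1 : ℤ)⟧)⟦(1 : ℤ)⟧) :=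
    filtBy_iso ((shiftFunctorCompIsoId D (-1 : ℤ) (1 : ℤ) (by omega)).symm.app B) hFB
  -- vanishing statements
  have VAB : ∀ u : A ⟶ B, u = 0 :=
    filtBy_hom_zero (fun U hU V hV => by
      obtain ⟨φ, hφ1, hφ2⟩ := hU
      obtain ⟨ψ, hψ1, hψ2⟩ := hV
      exact σ.hom_zero φ ψ U V hφ2 hψ2 (by linarith)) hFA hFB
  have VA1B1 : ∀ u : A⟦(1 : ℤ)⟧ ⟶ B⟦(1 : ℤ)⟧, u = 0 :=
    filtBy_hom_zero (fun U hU V hV => by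
      obtain ⟨φ, hφ1, hφ2⟩ := hU
      obtain ⟨ψ, hψ1, hψ2⟩ := hV
      exact σ.hom_zero φ ψ U V hφ2 hψ2 (by linarith)) hFA1 hFB1
  have VBA2 : ∀ u : B ⟶ (A⟦(1 : ℤ)⟧)⟦(1 : ℤ)⟧, u = 0 :=
    filtBy_hom_zero (fun U hU V hV => by
      obtain ⟨ψ, hψ1, hψ2⟩ := hU
      obtain ⟨φ, hφ1, hφ2⟩ := hV
      exact hom_zero_of_gap σ hgl (by linarith) hψ2 hφ2) hFB hFA2
  have VBmA2 : ∀ u : (B⟦(-1 : ℤ)⟧)⟦(1 : ℤ)⟧ ⟶ (A⟦(1 : ℤ)⟧)⟦(1 : ℤ)⟧, u = 0 :=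
    filtBy_hom_zero (fun U hU V hV => by
      obtain ⟨ψ, hψ1, hψ2⟩ := hU
      obtain ⟨φ, hφ1, hφ2⟩ := hV
      exact hom_zero_of_gap σ hgl (by linarith) hψ2 hφ2) hFBm hFA2
  -- shifted morphisms and triangles
  have hfg : f ≫ g = 0 := comp_distTriang_mor_zero₁₂ _ hT
  have hf1g1 : (shiftFunctor D (1 : ℤ)).map f ≫ (shiftFunctor D (1 : ℤ)).map g = 0 := by
    rw [← Functor.map_comp, hfg, Functor.map_zero]
  have hT3 : Triangle.mk (-(shiftFunctor D (1 : ℤ)).map f) (-(shiftFunctor D (1 : ℤ)).map g)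
      (-(shiftFunctor D (1 : ℤ)).map h) ∈ distTriang D :=
    rot_of_distTriang _ (rot_of_distTriang _ (rot_of_distTriang _ hT))
  -- cancellation along f⟦1⟧
  have hcan : ∀ α α' : A ⟶ A⟦(1 : ℤ)⟧,
      α ≫ (shiftFunctor D (1 : ℤ)).map f = α' ≫ (shiftFunctor D (1 : ℤ)).map f → α = α' := by
    intro α α' hh
    have hz : (α - α') ≫ (shiftFunctor D (1 : ℤ)).map f = 0 := by
      rw [Preadditive.sub_comp, hh, sub_self]
    obtain ⟨γ, hγ⟩ := Pretriangulated.Triangle.coyoneda_exact₁ _ hT (α - α') hz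
    rw [VAB γ] at hγ
    exact sub_eq_zero.mp (hγ.trans zero_comp)
  -- existence of the partial lift
  have hex : ∀ ξ : E ⟶ E⟦(1 : ℤ)⟧, f ≫ ξ ≫ (shiftFunctor D (1 : ℤ)).map g = 0 →
      ∃ α : A ⟶ A⟦(1 : ℤ)⟧, f ≫ ξ = α ≫ (shiftFunctor D (1 : ℤ)).map f := by
    intro ξ hξ
    have hcond : (f ≫ ξ) ≫ (Triangle.mk (-(shiftFunctor D (1 : ℤ)).map f)
        (-(shiftFunctor D (1 : ℤ)).map g) (-(shiftFunctor D (1 : ℤ)).map h)).mor₂ = 0 := by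
      show (f ≫ ξ) ≫ (-(shiftFunctor D (1 : ℤ)).map g) = 0
      rw [Preadditive.comp_neg, Category.assoc, hξ, neg_zero]
    obtain ⟨γ, hγ⟩ := Pretriangulated.Triangle.coyoneda_exact₂ _ hT3 (f ≫ ξ) hcond
    have hγ' : f ≫ ξ = γ ≫ (-(shiftFunctor D (1 : ℤ)).map f) := hγ
    refine ⟨-γ, ?_⟩
    rw [hγ']; exact (Preadditive.comp_neg _ _).trans (Preadditive.neg_comp _ _).symm
  -- surjectivity input: extension along f
  have hpsur : ∀ α : A ⟶ A⟦(1 : ℤ)⟧, ∃ ψ : E ⟶ A⟦(1 : ℤ)⟧, α = f ≫ ψ := by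
    intro α
    have hc : (Triangle.mk f g h).invRotate.mor₁ ≫ α = 0 := by
      apply (shiftFunctor D (1 : ℤ)).map_injective
      rw [Functor.map_zero]
      exact VBmA2 _
    obtain ⟨ψ, hψ⟩ := Pretriangulated.Triangle.yoneda_exact₂ _
      (inv_rot_of_distTriang _ hT) α hc
    exact ⟨ψ, hψ⟩
  -- the submodule W
  let c : (E ⟶ E⟦(1 : ℤ)⟧) →ₗ[k] (A ⟶ B⟦(1 : ℤ)⟧) :=
    { toFun := fun ξ => f ≫ ξ ≫ (shiftFunctor D (1 : ℤ)).map g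
      map_add' := fun ξ ζ => by
        rw [Preadditive.add_comp, Preadditive.comp_add]
      map_smul' := fun r ξ => by
        rw [Linear.smul_comp, Linear.comp_smul]
        rfl }
  have hWmem : ∀ ξ : LinearMap.ker c,
      f ≫ (ξ : E ⟶ E⟦(1 : ℤ)⟧) ≫ (shiftFunctor D (1 : ℤ)).map g = 0 :=
    fun ξ => LinearMap.mem_ker.mp ξ.2
  have exu : ∀ ξ : LinearMap.ker c, ∃! α : A ⟶ A⟦(1 : ℤ)⟧,
      f ≫ (ξ : E ⟶ E⟦(1 : ℤ)⟧) = α ≫ (shiftFunctor D (1 : ℤ)).map f := by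
    intro ξ
    obtain ⟨α, hα⟩ := hex ξ.1 (hWmem ξ)
    exact ⟨α, hα, fun α' hα' => hcan α' α (hα'.symm.trans hα)⟩
  let pc : LinearMap.ker c → (A ⟶ A⟦(1 : ℤ)⟧) := fun ξ => (exu ξ).exists.choose
  have pcspec : ∀ ξ : LinearMap.ker c,
      f ≫ (ξ : E ⟶ E⟦(1 : ℤ)⟧) = pc ξ ≫ (shiftFunctor D (1 : ℤ)).map f :=
    fun ξ => (exu ξ).exists.choose_spec
  let p : LinearMap.ker c →ₗ[k] (A ⟶ A⟦(1 : ℤ)⟧) :=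
    { toFun := pc
      map_add' := fun ξ ζ => hcan _ _ (by
        calc pc (ξ + ζ) ≫ (shiftFunctor D (1 : ℤ)).map f
            = f ≫ (ξ.1 + ζ.1) := (pcspec (ξ + ζ)).symm
        _ = (pc ξ + pc ζ) ≫ (shiftFunctor D (1 : ℤ)).map f := by
            rw [Preadditive.comp_add, pcspec ξ, pcspec ζ, Preadditive.add_comp])
      map_smul' := fun r ξ => hcan _ _ (by
        calc pc (r • ξ) ≫ (shiftFunctor D (1 : ℤ)).map f
            = f ≫ (r • ξ.1) := (pcspec (r • ξ)).symm
        _ = (r • pc ξ) ≫ (shiftFunctor D (1 : ℤ)).map f := by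
            rw [Linear.comp_smul, pcspec ξ, Linear.smul_comp]) }
  have psurj : Function.Surjective p := by
    intro α
    obtain ⟨ψ, hψ⟩ := hpsur α
    have hmem : f ≫ (ψ ≫ (shiftFunctor D (1 : ℤ)).map f) ≫ (shiftFunctor D (1 : ℤ)).map g
        = 0 := by
      rw [Category.assoc, hf1g1, comp_zero, comp_zero]
    refine ⟨⟨ψ ≫ (shiftFunctor D (1 : ℤ)).map f, LinearMap.mem_ker.mpr hmem⟩, ?_⟩
    apply hcan
    show pc ⟨ψ ≫ (shiftFunctor D (1 : ℤ)).map f, LinearMap.mem_ker.mpr hmem⟩ ≫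
      (shiftFunctor D (1 : ℤ)).map f = α ≫ (shiftFunctor D (1 : ℤ)).map f
    rw [← pcspec ⟨ψ ≫ (shiftFunctor D (1 : ℤ)).map f, LinearMap.mem_ker.mpr hmem⟩]
    show f ≫ ψ ≫ (shiftFunctor D (1 : ℤ)).map f = α ≫ (shiftFunctor D (1 : ℤ)).map f
    rw [← Category.assoc, ← hψ]
  -- the map q on ker p
  have exuq : ∀ ξ : LinearMap.ker p, ∃! v : B ⟶ B⟦(1 : ℤ)⟧, ∃ β : B ⟶ E⟦(1 : ℤ)⟧,
      (ξ.1 : E ⟶ E⟦(1 : ℤ)⟧) = g ≫ β ∧ v = β ≫ (shiftFunctor D (1 : ℤ)).map g := by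
    intro ξ
    have hker : pc ξ.1 = 0 := LinearMap.mem_ker.mp ξ.2
    have hfξ : f ≫ (ξ.1 : E ⟶ E⟦(1 : ℤ)⟧) = 0 := by
      rw [pcspec ξ.1, hker, zero_comp]
    obtain ⟨β0, hβ0⟩ := Pretriangulated.Triangle.yoneda_exact₂ _ hT ξ.1.1 hfξ
    let β : B ⟶ E⟦(1 : ℤ)⟧ := β0
    have hβ : (ξ.1 : E ⟶ E⟦(1 : ℤ)⟧) = g ≫ β := hβ0
    refine ⟨β ≫ (shiftFunctor D (1 : ℤ)).map g, ⟨β, hβ, rfl⟩, ?_⟩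
    rintro v' ⟨β', hβ', rfl⟩
    have hδ : g ≫ (β' - β) = 0 := by
      rw [Preadditive.comp_sub, ← hβ, ← hβ', sub_self]
    obtain ⟨ε0, hε0⟩ := Pretriangulated.Triangle.yoneda_exact₂ _
      (rot_of_distTriang _ hT) (β' - β) hδ
    let ε : A⟦(1 : ℤ)⟧ ⟶ E⟦(1 : ℤ)⟧ := ε0
    have hε' : β' - β = h ≫ ε := hε0
    have hz : (β' - β) ≫ (shiftFunctor D (1 : ℤ)).map g = 0 := by
      rw [hε', Category.assoc, VA1B1 (ε ≫ (shiftFunctor D (1 : ℤ)).map g), comp_zero]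
    rw [Preadditive.sub_comp] at hz
    exact sub_eq_zero.mp hz
  let qc : LinearMap.ker p → (B ⟶ B⟦(1 : ℤ)⟧) := fun ξ => (exuq ξ).exists.choose
  have qcspec : ∀ ξ : LinearMap.ker p, ∃ β : B ⟶ E⟦(1 : ℤ)⟧,
      (ξ.1 : E ⟶ E⟦(1 : ℤ)⟧) = g ≫ β ∧ qc ξ = β ≫ (shiftFunctor D (1 : ℤ)).map g :=
    fun ξ => (exuq ξ).exists.choose_spec
  have quniq : ∀ (ξ : LinearMap.ker p) (v : B ⟶ B⟦(1 : ℤ)⟧),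
      (∃ β : B ⟶ E⟦(1 : ℤ)⟧, (ξ.1 : E ⟶ E⟦(1 : ℤ)⟧) = g ≫ β ∧
        v = β ≫ (shiftFunctor D (1 : ℤ)).map g) → qc ξ = v :=
    fun ξ v hv => (exuq ξ).unique (qcspec ξ) hv
  let q : LinearMap.ker p →ₗ[k] (B ⟶ B⟦(1 : ℤ)⟧) :=
    { toFun := qc
      map_add' := fun ξ ζ => by
        obtain ⟨βξ, hξ1, hξ2⟩ := qcspec ξ
        obtain ⟨βζ, hζ1, hζ2⟩ := qcspec ζ
        refine quniq (ξ + ζ) (qc ξ + qc ζ) ⟨βξ + βζ, ?_, ?_⟩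
        · show (ξ.1 : E ⟶ E⟦(1 : ℤ)⟧) + (ζ.1 : E ⟶ E⟦(1 : ℤ)⟧) = _
          rw [hξ1, hζ1, Preadditive.comp_add]
        · rw [hξ2, hζ2, Preadditive.add_comp]
      map_smul' := fun r ξ => by
        obtain ⟨βξ, hξ1, hξ2⟩ := qcspec ξ
        refine quniq (r • ξ) (r • qc ξ) ⟨r • βξ, ?_, ?_⟩
        · show r • (ξ.1 : E ⟶ E⟦(1 : ℤ)⟧) = _
          rw [hξ1, Linear.comp_smul]
        · rw [hξ2, Linear.smul_comp] }
  have qsurj : Function.Surjective q := by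
    intro φφ
    have hc3 : φφ ≫ (Triangle.mk (-(shiftFunctor D (1 : ℤ)).map f)
        (-(shiftFunctor D (1 : ℤ)).map g) (-(shiftFunctor D (1 : ℤ)).map h)).mor₃ = 0 := by
      show φφ ≫ (-(shiftFunctor D (1 : ℤ)).map h) = 0
      rw [Preadditive.comp_neg, VBA2 (φφ ≫ (shiftFunctor D (1 : ℤ)).map h), neg_zero]
    obtain ⟨β0, hβ0⟩ := Pretriangulated.Triangle.coyoneda_exact₃ _ hT3 φφ hc3
    let β : B ⟶ E⟦(1 : ℤ)⟧ := β0
    have hβ' : φφ = β ≫ (-(shiftFunctor D (1 : ℤ)).map g) := hβ0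
    have hfξ0 : f ≫ (g ≫ (-β)) = 0 := by
      rw [← Category.assoc, hfg, zero_comp]
    have hmemW : f ≫ (g ≫ (-β)) ≫ (shiftFunctor D (1 : ℤ)).map g = 0 := by
      rw [← Category.assoc, ← Category.assoc, hfg, zero_comp, zero_comp]
    have hmemP : pc ⟨g ≫ (-β), LinearMap.mem_ker.mpr hmemW⟩ = 0 := by
      apply hcan
      rw [← pcspec ⟨g ≫ (-β), LinearMap.mem_ker.mpr hmemW⟩]
      show f ≫ (g ≫ (-β)) = (0 : A ⟶ A⟦(1 : ℤ)⟧) ≫ (shiftFunctor D (1 : ℤ)).map f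
      rw [hfξ0, zero_comp]
    refine ⟨⟨⟨g ≫ (-β), LinearMap.mem_ker.mpr hmemW⟩, LinearMap.mem_ker.mpr hmemP⟩, ?_⟩
    refine quniq _ φφ ⟨-β, rfl, ?_⟩
    rw [hβ', Preadditive.comp_neg, Preadditive.neg_comp]
  -- dimension count
  have e1 := LinearMap.finrank_range_add_finrank_ker p
  have e2 : Module.finrank k ↥(LinearMap.range p) = Module.finrank k (A ⟶ A⟦(1 : ℤ)⟧) := by
    rw [LinearMap.range_eq_top.mpr psurj]
    exact finrank_top k _
  have e3 := LinearMap.finrank_range_add_finrank_ker q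
  have e4 : Module.finrank k ↥(LinearMap.range q) = Module.finrank k (B ⟶ B⟦(1 : ℤ)⟧) := by
    rw [LinearMap.range_eq_top.mpr qsurj]
    exact finrank_top k _
  have e5 : Module.finrank k ↥(LinearMap.ker c) ≤ Module.finrank k (E ⟶ E⟦(1 : ℤ)⟧) :=
    Submodule.finrank_le (LinearMap.ker c)
  omega

end
end

section
/- Let T be a triangulated category of finite type over k with Serre functor S, equipped with a stability condition σ, and assume the minimal value d of dim Hom(D,D[1]) over objects D ∈ T satisfies d ≥ 1. Let F ∈ T be an object such that both F and SF[−1] are σ-semistable. Then 0 ≤ φ(SF[−1]) − φ(F) ≤ gldim(σ) − 1. -/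
open CategoryTheory Limits Pretriangulated

noncomputable section

universe v u v₂ u₂ v₃ u₃

/-- Lemma `lem:sbound`. If `F` and `SF[-1]` are `σ`-semistable (in a
finite type category with Serre functor and minimal `hom¹` value `d ≥ 1`), then
`0 ≤ φ(SF[-1]) − φ(F) ≤ gldim σ − 1`. -/
theorem statement12 (k : Type) [Field k]
    (D : Type u) [Category.{v} D] [Preadditive D] [Linear k D] [HasZeroObject D]
    [HasShift D ℤ] [∀ n : ℤ, (shiftFunctor D n).Additive] [Pretriangulated D]
    (hft : FiniteTypeCat k D) (Ser : SerreFunctor k D)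
    (σ : StabilityCondition D)
    (hd : 1 ≤ minExt1 k D)
    (F : D) (hF : IsSemistable σ F)
    (hSF : IsSemistable σ ((Ser.S.functor.obj F)⟦(-1 : ℤ)⟧)) :
    0 ≤ σ.phase ((Ser.S.functor.obj F)⟦(-1 : ℤ)⟧) - σ.phase F ∧
    ((σ.phase ((Ser.S.functor.obj F)⟦(-1 : ℤ)⟧) - σ.phase F : ℝ) : EReal)
      ≤ gldim σ - 1 := by
  obtain ⟨hFnz, φ, hFφ⟩ := hF
  obtain ⟨hSFnz, ψ, hSFψ⟩ := hSF
  set SF := Ser.S.functor.obj F with hSFdef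
  have hphF : σ.phase F = φ := σ.phase_eq φ F hFφ hFnz
  have hphSF : σ.phase (SF⟦(-1 : ℤ)⟧) = ψ := σ.phase_eq ψ _ hSFψ hSFnz
  -- Serre duality: if all maps `Y ⟶ S X` vanish, then all maps `X ⟶ Y` vanish
  have key : ∀ (X Y : D), (∀ f : Y ⟶ Ser.S.functor.obj X, f = 0) → ∀ g : X ⟶ Y, g = 0 := by
    intro X Y hf g
    have hsub : Subsingleton (Y ⟶ Ser.S.functor.obj X) := ⟨fun a b => by rw [hf a, hf b]⟩
    have hLg : Ser.duality X Y g = Ser.duality X Y 0 := by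
      apply LinearMap.ext; intro x
      rw [Subsingleton.elim x (0 : Y ⟶ Ser.S.functor.obj X)]
      simp
    have := (Ser.duality X Y).injective hLg
    simpa using this
  -- a nonzero map `F ⟶ S F` (dual to the identity)
  have hg0 : ∃ g : F ⟶ SF, g ≠ 0 := by
    by_contra h
    push_neg at h
    have hid : 𝟙 F = 0 := key F F h (𝟙 F)
    exact hFnz ((IsZero.iff_id_eq_zero F).mpr hid)
  -- a nonzero map `F⟦1⟧ ⟶ S F` (dual to a nonzero self-extension, using `d ≥ 1`)
  have hh0 : ∃ h : (F⟦(1 : ℤ)⟧ : D) ⟶ SF, h ≠ 0 := by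
    by_contra h
    push_neg at h
    have hz : ∀ g : F ⟶ (F⟦(1 : ℤ)⟧ : D), g = 0 := key F (F⟦(1 : ℤ)⟧) h
    have hsub : Subsingleton (F ⟶ (F⟦(1 : ℤ)⟧ : D)) := ⟨fun a b => by rw [hz a, hz b]⟩
    have h0 : Module.finrank k (F ⟶ (F⟦(1 : ℤ)⟧ : D)) = 0 :=
      Module.finrank_zero_of_subsingleton
    have hmem : (0 : ℕ) ∈
        {d : ℕ | ∃ X : D, ¬ IsZero X ∧ Module.finrank k (X ⟶ X⟦(1 : ℤ)⟧) = d} :=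
      ⟨F, hFnz, h0⟩
    have hle := Nat.sInf_le hmem
    unfold minExt1 at hd
    omega
  obtain ⟨g0, hg0⟩ := hg0
  obtain ⟨h0, hh0⟩ := hh0
  -- the canonical iso `(S F⟦-1⟧)⟦1⟧ ≅ S F`
  let e : (((SF⟦(-1 : ℤ)⟧)⟦(1 : ℤ)⟧ : D) ≅ SF) :=
    (shiftFunctorCompIsoId D (-1 : ℤ) (1 : ℤ) (by norm_num)).app SF
  have hmem1 : ((SF⟦(-1 : ℤ)⟧)⟦(1 : ℤ)⟧ : D) ∈ σ.P (ψ + 1) := σ.shift_mem ψ _ hSFψ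
  have hmemF1 : (F⟦(1 : ℤ)⟧ : D) ∈ σ.P (φ + 1) := σ.shift_mem φ F hFφ
  have hne1 : (h0 ≫ e.inv : (F⟦(1 : ℤ)⟧ : D) ⟶ _) ≠ 0 := by
    intro hz
    apply hh0
    have hcomp : h0 ≫ e.inv ≫ e.hom = 0 := by
      rw [← Category.assoc, hz, Limits.zero_comp]
    simpa using hcomp
  have h1 : φ ≤ ψ := by
    by_contra hlt
    push_neg at hlt
    exact hne1 (σ.hom_zero (φ + 1) (ψ + 1) _ _ hmemF1 hmem1 (by linarith) _)
  have hne0 : (g0 ≫ e.inv : F ⟶ ((SF⟦(-1 : ℤ)⟧)⟦(1 : ℤ)⟧ : D)) ≠ 0 := by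
    intro hz
    apply hg0
    have hcomp : g0 ≫ e.inv ≫ e.hom = 0 := by
      rw [← Category.assoc, hz, Limits.zero_comp]
    simpa using hcomp
  have hsup : ((ψ + 1 - φ : ℝ) : EReal) ≤ gldim σ := by
    apply le_sSup
    exact ⟨φ, ψ + 1, F, _, hFφ, hmem1, ⟨g0 ≫ e.inv, hne0⟩, rfl⟩
  refine ⟨by rw [hphF, hphSF]; linarith, ?_⟩
  rw [hphF, hphSF]
  have hcast : ((ψ - φ : ℝ) : EReal) = ((ψ + 1 - φ : ℝ) : EReal) - 1 := by
    rw [show (ψ - φ : ℝ) = (ψ + 1 - φ) - 1 by ring, EReal.coe_sub, EReal.coe_one]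
  rw [hcast]
  exact EReal.sub_le_sub hsup le_rfl

end
end
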